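/- Let t, p be positive integers and for 1 ≤ k ≤ ⌊(t+p−2)/p⌋ set S_k = {x ∈ ℤ : (k−1)(t+p)+1 ≤ x ≤ kt−1}. If λ is a (t, t+1, …, t+p)-core partition, then β(λ) is contained in the union of the sets S_k for 1 ≤ k ≤ ⌊(t+p−2)/p⌋. -/

import Mathlib

open Finset

/-- A partition: a weakly decreasing finite list of positive integers. -/
structure NatPartition where
  parts : List ℕ
  sorted : parts.Pairwise (· ≥ ·)
  pos : ∀ x ∈ parts, 0 < x

namespace NatPartition

/-- The size of a partition: the sum of its parts. -/
def size (l : NatPartition) : ℕ := l.parts.sum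

/-- The hook length of the box in row `i`, column `j` (both 0-indexed):
arm + leg + 1, computed as `λ_i - j + #{k : λ_k > j} - i - 1`. -/
def hook (l : NatPartition) (i j : ℕ) : ℕ :=
  l.parts.getD i 0 - j + l.parts.countP (fun a => decide (j < a)) - i - 1

/-- The box `(i, j)` (0-indexed) belongs to the Young diagram of `l`. -/
def InDiagram (l : NatPartition) (i j : ℕ) : Prop :=
  i < l.parts.length ∧ j < l.parts.getD i 0

/-- A partition is a `t`-core if no hook length is divisible by `t`. -/
def IsCore (l : NatPartition) (t : ℕ) : Prop :=
  ∀ i j, l.InDiagram i j → ¬ t ∣ l.hook i j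

/-- The β-set of a partition: the set of first-column hook lengths. -/
def betaSet (l : NatPartition) : Finset ℕ :=
  (Finset.range l.parts.length).image (fun i => l.hook i 0)

end NatPartition

namespace NatPartition

/-- The number of parts exceeding `j` (the conjugate partition). -/
def cnt (l : NatPartition) (j : ℕ) : ℕ := l.parts.countP (fun a => decide (j < a))

lemma hook_eq (l : NatPartition) (i j : ℕ) :
    l.hook i j = l.parts.getD i 0 - j + l.cnt j - i - 1 := rfl

lemma sorted_count_aux (L : List ℕ) (hL : L.Pairwise (· ≥ ·)) (j k : ℕ)
    (hk : k < L.length) :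
    j < L.getD k 0 ↔ k < L.countP (fun a => decide (j < a)) := by
  induction L generalizing k with
  | nil => simp at hk
  | cons a L ih =>
    rw [List.pairwise_cons] at hL
    obtain ⟨ha, hL⟩ := hL
    rw [List.countP_cons]
    cases k with
    | zero =>
      simp only [List.getD_cons_zero]
      constructor
      · intro h
        simp [h]
      · intro h
        by_contra hja
        push_neg at hja
        have h0 : L.countP (fun a => decide (j < a)) = 0 := by
          rw [List.countP_eq_zero]
          intro b hb
          simp only [decide_eq_true_eq]
          exact Nat.not_lt.2 (le_trans (ha b hb) hja)
        rw [h0] at h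
        simp [Nat.not_lt.2 hja] at h
    | succ k =>
      simp only [List.getD_cons_succ, List.length_cons] at *
      have hk' : k < L.length := by omega
      rw [ih hL k hk']
      by_cases hja : j < a
      · simp [hja]
      · have h0 : L.countP (fun a => decide (j < a)) = 0 := by
          rw [List.countP_eq_zero]
          intro b hb
          simp only [decide_eq_true_eq]
          exact fun hjb => hja (lt_of_lt_of_le hjb (ha b hb))
        simp [hja, h0]

variable (l : NatPartition)

lemma cnt_iff (j k : ℕ) (hk : k < l.parts.length) :
    j < l.parts.getD k 0 ↔ k < l.cnt j :=
  sorted_count_aux l.parts l.sorted j k hk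

lemma cnt_zero : l.cnt 0 = l.parts.length := by
  rw [cnt, List.countP_eq_length]
  intro a ha
  simpa using l.pos a ha

lemma getD_pos {i : ℕ} (hi : i < l.parts.length) : 0 < l.parts.getD i 0 := by
  rw [List.getD_eq_getElem _ _ hi]
  exact l.pos _ (List.getElem_mem hi)

lemma cnt_le_len (j : ℕ) : l.cnt j ≤ l.parts.length :=
  List.countP_le_length

lemma cnt_antitone (j : ℕ) : l.cnt (j + 1) ≤ l.cnt j := by
  apply List.countP_mono_left
  intro a _ h
  simp only [decide_eq_true_eq] at *
  omega

lemma hook_zero {i : ℕ} (hi : i < l.parts.length) :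
    l.hook i 0 = l.parts.getD i 0 + l.parts.length - i - 1 := by
  rw [hook_eq, l.cnt_zero]
  omega

lemma mem_betaSet_iff {x : ℕ} :
    x ∈ l.betaSet ↔ ∃ i, i < l.parts.length ∧ l.hook i 0 = x := by
  simp [betaSet]

lemma betaSet_pos {x : ℕ} (hx : x ∈ l.betaSet) : 1 ≤ x := by
  obtain ⟨i, hi, hix⟩ := l.mem_betaSet_iff.1 hx
  rw [l.hook_zero hi] at hix
  have := l.getD_pos hi
  omega

/-- Key lemma: if `l` is an `s`-core and `x ∈ β(l)` with `s ≤ x`, then `x - s ∈ β(l)`. -/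
lemma sub_mem_betaSet {s x : ℕ} (hs : 0 < s) (hcore : l.IsCore s)
    (hx : x ∈ l.betaSet) (hsx : s ≤ x) : x - s ∈ l.betaSet := by
  by_contra hy
  obtain ⟨i, hi, hix⟩ := l.mem_betaSet_iff.1 hx
  have hxval : x = l.parts.getD i 0 + l.parts.length - i - 1 := by
    rw [← hix, l.hook_zero hi]
  -- find the greatest j ≤ x - s with j + (length - cnt j) ≤ x - s
  have hP0 : 0 + (l.parts.length - l.cnt 0) ≤ x - s := by
    rw [l.cnt_zero]; omega
  set j := Nat.findGreatest (fun j => j + (l.parts.length - l.cnt j) ≤ x - s) (x - s) with hjdef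
  have hPj : j + (l.parts.length - l.cnt j) ≤ x - s :=
    Nat.findGreatest_spec (P := fun j => j + (l.parts.length - l.cnt j) ≤ x - s)
      (Nat.zero_le (x - s)) hP0
  have hjy : j ≤ x - s :=
    Nat.findGreatest_le (x - s)
  have hcjlen : l.cnt j ≤ l.parts.length := l.cnt_le_len j
  have hfj : j + (l.parts.length - l.cnt j) = x - s := by
    by_contra hne
    have hlt : j + (l.parts.length - l.cnt j) < x - s := lt_of_le_of_ne hPj hne
    have hnP : ¬ ((j + 1) + (l.parts.length - l.cnt (j + 1)) ≤ x - s) :=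
      Nat.findGreatest_is_greatest (P := fun j => j + (l.parts.length - l.cnt j) ≤ x - s)
        (n := x - s) (k := j + 1) (by omega) (by omega)
    push_neg at hnP
    have hcj1 : l.cnt (j + 1) ≤ l.cnt j := l.cnt_antitone j
    have hkcj : l.cnt j - (x - s - (j + (l.parts.length - l.cnt j))) < l.cnt j := by omega
    have hkge : l.cnt (j + 1) ≤ l.cnt j - (x - s - (j + (l.parts.length - l.cnt j))) := by
      omega
    set k := l.cnt j - (x - s - (j + (l.parts.length - l.cnt j))) with hkdef
    have hkn : k < l.parts.length := by omega
    have h1 : j < l.parts.getD k 0 := (l.cnt_iff j k hkn).2 hkcj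
    have h2 : ¬ (j + 1 < l.parts.getD k 0) := by
      intro h
      have := (l.cnt_iff (j + 1) k hkn).1 h
      omega
    have hak : l.parts.getD k 0 = j + 1 := by omega
    apply hy
    rw [l.mem_betaSet_iff]
    refine ⟨k, hkn, ?_⟩
    rw [l.hook_zero hkn, hak]
    omega
  -- j < λ_i and i + 1 ≤ cnt j
  have hjai : j < l.parts.getD i 0 := by
    by_contra hja
    push_neg at hja
    have hcji' : l.cnt j ≤ i := by
      by_contra h
      push_neg at h
      have := (l.cnt_iff j i hi).2 h
      omega
    omega
  have hcji : i + 1 ≤ l.cnt j := (l.cnt_iff j i hi).1 hjai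
  -- hook i j = s
  have hhook : l.hook i j = s := by
    rw [hook_eq]
    omega
  exact hcore i j ⟨hi, hjai⟩ (hhook ▸ dvd_refl s)

end NatPartition

theorem stmt3 (t p : ℕ) (ht : 0 < t) (hp : 0 < p) (l : NatPartition)
    (hcore : ∀ i ≤ p, l.IsCore (t + i)) :
    l.betaSet ⊆ (Finset.Icc 1 ((t + p - 2) / p)).biUnion
      (fun k => Finset.Icc ((k - 1) * (t + p) + 1) (k * t - 1)) := by
  set K := (t + p - 2) / p with hK
  have main : ∀ x, x ∈ l.betaSet →
      ∃ k, 1 ≤ k ∧ k ≤ K ∧ (k - 1) * (t + p) + 1 ≤ x ∧ x ≤ k * t - 1 := by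
    intro x
    induction x using Nat.strong_induction_on with
    | _ x IH =>
    intro hx
    have hx1 : 1 ≤ x := l.betaSet_pos hx
    by_cases hxt : x < t
    · refine ⟨1, le_refl 1, ?_, by omega, by omega⟩
      rw [hK, Nat.le_div_iff_mul_le hp]
      omega
    · push_neg at hxt
      -- x ≥ t; show x ≥ t + p + 1 and x - t, x - (t+p) ∈ β
      have hsub : ∀ i ≤ p, t + i ≤ x → x - (t + i) ∈ l.betaSet := by
        intro i hip hix
        exact l.sub_mem_betaSet (by omega) (hcore i hip) hx hix
      have hbig : ∀ i, i ≤ p → t + i + 1 ≤ x := by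
        intro i
        induction i with
        | zero =>
          intro _
          have h0 := hsub 0 (Nat.zero_le p) (by omega)
          have := l.betaSet_pos h0
          omega
        | succ i ih =>
          intro hip
          have h1 := ih (by omega)
          have h2 := hsub (i + 1) hip (by omega)
          have := l.betaSet_pos h2
          omega
      have hxp : t + p + 1 ≤ x := hbig p le_rfl
      obtain ⟨u, rfl⟩ : ∃ u, x = t + u := ⟨x - t, by omega⟩
      have hu : p + 1 ≤ u := by omega
      have h1 : t + u - t ∈ l.betaSet := hsub 0 (Nat.zero_le p) (by omega)
      have h2 : t + u - (t + p) ∈ l.betaSet := hsub p le_rfl (by omega)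
      rw [show t + u - t = u by omega] at h1
      rw [show t + u - (t + p) = u - p by omega] at h2
      obtain ⟨j, hj1, hj2, hj3, hj4⟩ := IH u (by omega) h1
      obtain ⟨m, hm1, hm2, hm3, hm4⟩ := IH (u - p) (by omega) h2
      obtain ⟨j', rfl⟩ : ∃ j', j = j' + 1 := ⟨j - 1, by omega⟩
      obtain ⟨m', rfl⟩ : ∃ m', m = m' + 1 := ⟨m - 1, by omega⟩
      simp only [Nat.add_sub_cancel] at hj3 hm3
      -- lower bound : (j'+1)*(t+p) + 1 ≤ t + u
      have hlow : (j' + 1) * (t + p) + 1 ≤ t + u := by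
        by_contra hcon
        push_neg at hcon
        have e1 : (j' + 1) * (t + p) = j' * (t + p) + (t + p) := by ring
        have hmj : m' < j' := by
          have h' : m' * (t + p) < j' * (t + p) := by omega
          exact Nat.lt_of_mul_lt_mul_right h'
        have hmt : (m' + 1) * t ≤ j' * t := Nat.mul_le_mul_right t (by omega)
        have e2 : j' * (t + p) = j' * t + j' * p := by ring
        have hjp : p ≤ j' * p := Nat.le_mul_of_pos_left p (by omega)
        omega
      have hupper : t + u ≤ (j' + 2) * t - 1 := by
        have e3 : (j' + 2) * t = (j' + 1) * t + t := by ring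
        have e4 : (j' + 1) * t = j' * t + t := by ring
        omega
      refine ⟨j' + 2, by omega, ?_, by simpa using hlow, hupper⟩
      -- j' + 2 ≤ K
      have e4 : (j' + 1) * (t + p) = (j' + 1) * t + (j' + 1) * p := by ring
      have e5 : (j' + 2) * t = (j' + 1) * t + t := by ring
      have e6 : (j' + 2) * p = (j' + 1) * p + p := by ring
      have hkey : (j' + 1) * p + 2 ≤ t := by omega
      rw [hK, Nat.le_div_iff_mul_le hp]
      omega
  intro x hx
  obtain ⟨k, hk1, hk2, hk3, hk4⟩ := main x hx
  rw [Finset.mem_biUnion]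
  exact ⟨k, Finset.mem_Icc.2 ⟨hk1, hk2⟩, Finset.mem_Icc.2 ⟨hk3, hk4⟩⟩
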